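/- Fix p ∈ (1/2, 1) and let L_ad(p,p̃) = p·(-log p̃) + (1-p)·(-log(p̃(1-p) + p(1-p̃))) for p̃ ∈ (0,1]. Then the derivative ∂L_ad/∂p̃ = -p/p̃ - (1-p)(1-2p)/(p̃(1-p) + p(1-p̃)) is strictly negative for all p̃ ∈ (0,1), so L_ad(p,·) is strictly decreasing on (0,1) and its infimum over (0,1] is attained at p̃ = 1. -/

import Mathlib

/-- Adaptive agreement loss with biased prediction `p` and debiasing prediction `pt`. -/
noncomputable def adLoss (p pt : ℝ) : ℝ :=
  p * (-Real.log pt) + (1 - p) * (-Real.log (pt * (1 - p) + p * (1 - pt)))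

lemma adLoss_hasDerivAt (p pt : ℝ) (hpt : 0 < pt)
    (hD : pt * (1 - p) + p * (1 - pt) ≠ 0) :
    HasDerivAt (fun x => adLoss p x)
      (-p / pt - (1 - p) * (1 - 2 * p) / (pt * (1 - p) + p * (1 - pt))) pt := by
  have h2 : HasDerivAt (fun x : ℝ => x * (1 - p) + p * (1 - x)) (1 - 2 * p) pt := by
    have := ((hasDerivAt_id pt).mul_const (1 - p)).add
      (((hasDerivAt_const pt (1:ℝ)).sub (hasDerivAt_id pt)).const_mul p)
    exact this.congr_deriv (by ring)
  have hlog1 : HasDerivAt (fun x : ℝ => Real.log x) (1 / pt) pt := by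
    simpa using Real.hasDerivAt_log (ne_of_gt hpt)
  have hlog2 := h2.log hD
  have h := ((hlog1.neg.const_mul p)).add ((hlog2.neg.const_mul (1 - p)))
  refine h.congr_deriv ?_
  field_simp
  ring

/-- for p ∈ (1/2, 1), ∂L_ad/∂p̃ = -p/p̃ - (1-p)(1-2p)/(p̃(1-p)+p(1-p̃))
is strictly negative on (0,1), L_ad(p,·) is strictly decreasing on (0,1), and its
infimum over (0,1] is attained at p̃ = 1. -/
theorem adLoss_strict_anti_of_half_lt (p : ℝ) (hp : p ∈ Set.Ioo (1/2 : ℝ) 1) :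
    (∀ pt ∈ Set.Ioo (0:ℝ) 1,
      deriv (fun x => adLoss p x) pt
        = -p / pt - (1 - p) * (1 - 2 * p) / (pt * (1 - p) + p * (1 - pt))) ∧
    (∀ pt ∈ Set.Ioo (0:ℝ) 1,
      -p / pt - (1 - p) * (1 - 2 * p) / (pt * (1 - p) + p * (1 - pt)) < 0) ∧
    StrictAntiOn (fun pt => adLoss p pt) (Set.Ioo (0:ℝ) 1) ∧
    (∀ pt ∈ Set.Ioc (0:ℝ) 1, adLoss p 1 ≤ adLoss p pt) := by
  obtain ⟨hp1, hp2⟩ := hp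
  have hDpos : ∀ pt : ℝ, 0 < pt → pt ≤ 1 → 0 < pt * (1 - p) + p * (1 - pt) := by
    intro pt h1 h2
    nlinarith
  have hderiv : ∀ pt ∈ Set.Ioo (0:ℝ) 1,
      deriv (fun x => adLoss p x) pt
        = -p / pt - (1 - p) * (1 - 2 * p) / (pt * (1 - p) + p * (1 - pt)) := by
    intro pt ⟨h1, h2⟩
    exact (adLoss_hasDerivAt p pt h1 (ne_of_gt (hDpos pt h1 h2.le))).deriv
  have hneg : ∀ pt ∈ Set.Ioo (0:ℝ) 1,
      -p / pt - (1 - p) * (1 - 2 * p) / (pt * (1 - p) + p * (1 - pt)) < 0 := by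
    intro pt ⟨h1, h2⟩
    have hD := hDpos pt h1 h2.le
    rw [div_sub_div _ _ (ne_of_gt h1) (ne_of_gt hD), div_neg_iff]
    right
    constructor
    · nlinarith
    · positivity
  have hanti : StrictAntiOn (fun pt => adLoss p pt) (Set.Ioc (0:ℝ) 1) := by
    apply strictAntiOn_of_deriv_neg (convex_Ioc 0 1)
    · apply ContinuousOn.add
      · exact continuousOn_const.mul
          ((Real.continuousOn_log.comp continuousOn_id fun x hx => ne_of_gt hx.1).neg)
      · exact continuousOn_const.mul
          ((Real.continuousOn_log.comp (by fun_prop) fun x hx =>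
            ne_of_gt (hDpos x hx.1 hx.2)).neg)
    · intro pt hpt
      rw [interior_Ioc] at hpt
      rw [hderiv pt hpt]
      exact hneg pt hpt
  refine ⟨hderiv, hneg, hanti.mono Set.Ioo_subset_Ioc_self, ?_⟩
  intro pt ⟨h1, h2⟩
  rcases eq_or_lt_of_le h2 with h | h
  · rw [h]
  · exact (hanti ⟨h1, h2⟩ ⟨one_pos, le_refl 1⟩ h).le
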